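/- For every g ∈ G = Sp(V), the number of vectors v ∈ V with g v = v equals the number of cosets ω ∈ Ω⁺ with g·ω = ω plus the number of cosets ω ∈ Ω⁻ with g·ω = ω. (Equivalently, the permutation character of G on V equals the sum of the permutation characters of G on Ω⁺ and on Ω⁻.) -/

import Mathlib

set_option synthInstance.maxHeartbeats 1000000
set_option maxHeartbeats 1000000

open scoped BigOperators

/-- The field with `2^f` elements (`q = 2^f`). -/
abbrev Fq (f : ℕ) : Type := GaloisField 2 f

/-- The natural `2m`-dimensional symplectic space over `Fq f`. -/
abbrev V (f m : ℕ) : Type := (Fin m → Fq f) × (Fin m → Fq f)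

/-- The standard nondegenerate alternating bilinear form
`B((x,y),(x',y')) = ∑ i, (x i * y' i + y i * x' i)`. -/
noncomputable def B {f m : ℕ} (u w : V f m) : Fq f :=
  ∑ i, (u.1 i * w.2 i + u.2 i * w.1 i)

/-- The symplectic group `Sp_{2m}(2^f)`: the invertible linear maps preserving `B`. -/
def Sp (f m : ℕ) : Subgroup ((V f m →ₗ[Fq f] V f m)ˣ) where
  carrier := {g | ∀ u w : V f m,
    B ((g : V f m →ₗ[Fq f] V f m) u) ((g : V f m →ₗ[Fq f] V f m) w) = B u w}
  one_mem' := by intro u w; simp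
  mul_mem' := by
    intro g h hg hh u w
    simp only [Units.val_mul, Module.End.mul_apply]
    rw [hg, hh]
  inv_mem' := by
    intro g hg u w
    have := hg (((g⁻¹ : _ˣ) : V f m →ₗ[Fq f] V f m) u)
      (((g⁻¹ : _ˣ) : V f m →ₗ[Fq f] V f m) w)
    simpa [← Module.End.mul_apply, ← Units.val_mul] using this.symm

/-- The natural action of the symplectic group on `V` by matrix multiplication. -/
noncomputable instance {f m : ℕ} : MulAction (Sp f m) (V f m) where
  smul g v := ((g : (V f m →ₗ[Fq f] V f m)ˣ) : V f m →ₗ[Fq f] V f m) v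
  one_smul v := by simp [HSMul.hSMul, SMul.smul]
  mul_smul g h v := by simp [HSMul.hSMul, SMul.smul, Units.val_mul]

/-- The quadratic form of plus type: `Q⁺(x,y) = ∑ i, x i * y i`. -/
noncomputable def Qplus {f m : ℕ} (v : V f m) : Fq f := ∑ i, v.1 i * v.2 i

/-- The quadratic form of minus type:
`Q⁻(x,y) = x 0 ^ 2 + a * y 0 ^ 2 + ∑ i, x i * y i`. -/
noncomputable def Qminus {f m : ℕ} (hm : 0 < m) (a : Fq f) (v : V f m) : Fq f :=
  v.1 ⟨0, hm⟩ ^ 2 + a * v.2 ⟨0, hm⟩ ^ 2 + ∑ i, v.1 i * v.2 i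

/-- The isometry group of a quadratic form `Q` on `V`, as a subgroup of `Sp`. -/
def Ogrp {f m : ℕ} (Q : V f m → Fq f) : Subgroup (Sp f m) where
  carrier := {g | ∀ v : V f m, Q (g • v) = Q v}
  one_mem' := by intro v; rw [one_smul]
  mul_mem' := by intro g h hg hh v; rw [mul_smul, hg, hh]
  inv_mem' := by
    intro g hg v
    conv_rhs => rw [← smul_inv_smul g v]
    rw [hg]

/-- The orthogonal group `O⁺ = O⁺_{2m}(2^f)` of the plus-type form, inside `Sp`. -/
noncomputable def Oplus (f m : ℕ) : Subgroup (Sp f m) := Ogrp Qplus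

/-- The orthogonal group `O⁻ = O⁻_{2m}(2^f)` of the minus-type form, inside `Sp`. -/
noncomputable def Ominus (f m : ℕ) (hm : 0 < m) (a : Fq f) : Subgroup (Sp f m) :=
  Ogrp (Qminus hm a)

/-!
The quadratic forms on `V` with polar form `B` are the forms `Qw w = Q⁺ + B(w, ·)²`, `w ∈ V`, and
`O^ε` is the stabilizer of `Q^ε` under `Q ↦ Q ∘ g⁻¹`. Transported to `V`, this action becomes the
affine action `w ↦ g • w + c(g⁻¹)`, where `Q⁺ ∘ g = Q⁺ + B(c(g), ·)²`. The vector `c(g⁻¹)` is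
orthogonal to the fixed space of `g`, hence lies in the image of `1 + g`, so the affine action of
`g` is conjugate by a translation to the linear one and has as many fixed points. The affine action
has exactly two orbits, told apart by whether `Q⁺(w)` lies in the index-2 subgroup `{α² + α}`
(invariance comes from the cocycle, transitivity from transvections), namely those of `Q⁺ = Qw 0`
and of `Q⁻`. Hence the fixed points of `g` split into its fixed points on `G/O⁺` and on `G/O⁻`.
-/

section CharTwo

variable {K : Type*} [Field K] [CharP K 2]

theorem exists_dual_sq_eq [PerfectRing K 2] {M : Type*} [AddCommGroup M] [Module K M]
    (φ : M → K) (hadd : ∀ x y, φ (x + y) = φ x + φ y)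
    (hsmul : ∀ (c : K) x, φ (c • x) = c ^ 2 * φ x) :
    ∃ ℓ : Module.Dual K M, ∀ x, ℓ x ^ 2 = φ x := by
  let r := (frobeniusEquiv K 2).symm
  have hr (y : K) : r y ^ 2 = y := frobeniusEquiv_symm_pow_p K 2 y
  have hinj {y z : K} (h : y ^ 2 = z ^ 2) : y = z := frobenius_inj K 2 h
  refine ⟨⟨⟨fun x => r (φ x), fun x y => hinj ?_⟩, fun c x => hinj ?_⟩, fun x => hr (φ x)⟩
  · simp only [CharTwo.add_sq, hr, hadd]
  · simp [hr, hsmul, mul_pow]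

variable (K) in
def artinSchreier : K →+ K where
  toFun x := x ^ 2 + x
  map_zero' := by simp
  map_add' x y := by grind

theorem artinSchreier_apply (x : K) : artinSchreier K x = x ^ 2 + x := rfl

theorem sq_mem_range_artinSchreier {x : K} (hx : x ∈ (artinSchreier K).range) :
    x ^ 2 ∈ (artinSchreier K).range := by
  obtain ⟨α, rfl⟩ := hx
  exact ⟨α ^ 2, by simp only [artinSchreier_apply]; grind⟩

theorem index_range_artinSchreier [Finite K] : (artinSchreier K).range.index = 2 := by
  have hker : ((artinSchreier K).ker : Set K) = {0, 1} := by
    ext x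
    simp only [SetLike.mem_coe, AddMonoidHom.mem_ker, artinSchreier_apply, Set.mem_insert_iff,
      Set.mem_singleton_iff]
    exact ⟨fun h => by grind, by rintro (rfl | rfl) <;> grind⟩
  rw [AddSubgroup.index_range, ← SetLike.coe_sort_coe, hker, Nat.card_coe_set_eq,
    Set.ncard_pair zero_ne_one]

theorem add_mem_range_artinSchreier [Finite K] {x y : K} (hx : x ∉ (artinSchreier K).range)
    (hy : y ∉ (artinSchreier K).range) : x + y ∈ (artinSchreier K).range := by
  simp [AddSubgroup.add_mem_iff_of_index_two index_range_artinSchreier, hx, hy]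

end CharTwo

theorem exists_sq_mul_add_eq_one {K : Type*} [Field K] {k γ : K} (h : k = γ ^ 2 + γ) :
    ∃ l : K, l ^ 2 * k + l = 1 := by
  rcases eq_or_ne k 0 with hk | hk
  · exact ⟨1, by simp [hk]⟩
  · exact ⟨γ / k, by field_simp; grind⟩

namespace MulAction

variable {G X : Type*} [Group G] [MulAction G X]

theorem card_fixed_quotient_stabilizer (x : X) (g : G) :
    Nat.card {ω : G ⧸ stabilizer G x | g • ω = ω} =
      Nat.card {y : X | y ∈ orbit G x ∧ g • y = y} := by
  let e := (orbitEquivQuotientStabilizer G x).symm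
  have he (ω) : (e (g • ω) : X) = g • e ω := ofQuotientStabilizer_smul G x g ω
  refine Nat.card_congr ((e.subtypeEquiv fun ω => ?_).trans
    (Equiv.subtypeSubtypeEquivSubtypeInter (· ∈ orbit G x) (fun y => g • y = y)))
  rw [Set.mem_ofPred_eq, ← e.injective.eq_iff, Subtype.ext_iff, he]

theorem card_fixed_eq_add_of_orbits [Finite X] {x y : X} (hxy : y ∉ orbit G x)
    (hcover : ∀ z, z ∈ orbit G x ∨ z ∈ orbit G y) (g : G) :
    Nat.card {z : X | g • z = z} =
      Nat.card {ω : G ⧸ stabilizer G x | g • ω = ω} +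
        Nat.card {ω : G ⧸ stabilizer G y | g • ω = ω} := by
  have hsplit : {z : X | g • z = z} =
      {z | z ∈ orbit G x ∧ g • z = z} ∪ {z | z ∈ orbit G y ∧ g • z = z} := by
    ext z
    have := hcover z
    simp only [Set.mem_ofPred_eq, Set.mem_union]
    tauto
  have hdisj : Disjoint {z | z ∈ orbit G x ∧ g • z = z} {z | z ∈ orbit G y ∧ g • z = z} :=
    Set.disjoint_left.mpr fun z hx hy =>
      hxy (orbit_eq_iff.mp ((orbit_eq_iff.mpr hy.1).symm.trans (orbit_eq_iff.mpr hx.1)))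
  rw [card_fixed_quotient_stabilizer, card_fixed_quotient_stabilizer, Nat.card_coe_set_eq,
    Nat.card_coe_set_eq, Nat.card_coe_set_eq, hsplit, Set.ncard_union_eq hdisj]

end MulAction

theorem LinearMap.BilinForm.range_sub_one_eq_orthogonal_ker {K V : Type*} [Field K]
    [AddCommGroup V] [Module K V] [FiniteDimensional K V] {B : LinearMap.BilinForm K V}
    (hB : B.Nondegenerate) {g : V →ₗ[K] V} (hg : ∀ x y, B (g x) (g y) = B x y) :
    LinearMap.range (g - 1) = B.orthogonal (LinearMap.ker (g - 1)) := by
  refine Submodule.eq_of_le_of_finrank_eq ?_ ?_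
  · rintro _ ⟨x, rfl⟩ n hn
    have hgn : g n = n := sub_eq_zero.mp hn
    simp [← hg n x, hgn]
  · have := LinearMap.finrank_range_add_finrank_ker (g - 1 : V →ₗ[K] V)
    rw [finrank_orthogonal hB]
    omega

section Symplectic

variable {f m : ℕ}

theorem V.add_self (v : V f m) : v + v = 0 := by
  ext i <;> exact CharTwo.add_self_eq_zero _

theorem V.neg_eq (v : V f m) : -v = v := neg_eq_of_add_eq_zero_left (V.add_self v)

noncomputable def Bform : LinearMap.BilinForm (Fq f) (V f m) :=
  LinearMap.mk₂ (Fq f) B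
    (fun u v w => by simp only [B, Prod.fst_add, Prod.snd_add, Pi.add_apply, add_mul,
      Finset.sum_add_distrib]; abel)
    (fun c u w => by simp only [B, Prod.smul_fst, Prod.smul_snd, Pi.smul_apply, smul_eq_mul,
      Finset.mul_sum, mul_add, mul_assoc])
    (fun u v w => by simp only [B, Prod.fst_add, Prod.snd_add, Pi.add_apply, mul_add,
      Finset.sum_add_distrib]; abel)
    (fun c u w => by simp only [B, Prod.smul_fst, Prod.smul_snd, Pi.smul_apply, smul_eq_mul,
      Finset.mul_sum, mul_add, mul_left_comm])

theorem Bform_apply (u w : V f m) : Bform u w = B u w := rfl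

theorem B_add_left (u v w : V f m) : B (u + v) w = B u w + B v w :=
  LinearMap.map_add₂ Bform u v w

theorem B_add_right (u v w : V f m) : B u (v + w) = B u v + B u w :=
  map_add (Bform u) v w

theorem B_smul_left (c : Fq f) (u w : V f m) : B (c • u) w = c * B u w :=
  LinearMap.map_smul₂ Bform c u w

theorem B_smul_right (c : Fq f) (u w : V f m) : B u (c • w) = c * B u w :=
  map_smul (Bform u) c w

theorem B_comm (u w : V f m) : B u w = B w u :=
  Finset.sum_congr rfl fun i _ => by ring

theorem B_self (u : V f m) : B u u = 0 :=
  Finset.sum_eq_zero fun i _ => by rw [mul_comm (u.2 i)]; exact CharTwo.add_self_eq_zero _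

theorem Bform_nondegenerate : (Bform : LinearMap.BilinForm (Fq f) (V f m)).Nondegenerate := by
  refine (LinearMap.IsRefl.nondegenerate_iff_separatingLeft fun u w h => ?_).mpr fun u hu => ?_
  · rwa [Bform_apply, B_comm] at h
  · ext i
    · simpa [Bform_apply, B, Pi.single_apply] using hu (0, Pi.single i 1)
    · simpa [Bform_apply, B, Pi.single_apply] using hu (Pi.single i 1, 0)

theorem eq_of_forall_B_sq_eq {u v : V f m} (h : ∀ w, B u w ^ 2 = B v w ^ 2) : u = v :=
  sub_eq_zero.mp <| Bform_nondegenerate.1 _ fun w => by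
    rw [LinearMap.map_sub₂, sub_eq_zero]; exact frobenius_inj (Fq f) 2 (h w)

theorem Qplus_add (u v : V f m) : Qplus (u + v) = Qplus u + Qplus v + B u v := by
  simp only [Qplus, B, Prod.fst_add, Prod.snd_add, Pi.add_apply, ← Finset.sum_add_distrib]
  exact Finset.sum_congr rfl fun i _ => by ring

theorem Qplus_smul (c : Fq f) (u : V f m) : Qplus (c • u) = c ^ 2 * Qplus u := by
  simp only [Qplus, Prod.smul_fst, Prod.smul_snd, Pi.smul_apply, smul_eq_mul, Finset.mul_sum]
  exact Finset.sum_congr rfl fun i _ => by ring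

theorem Qplus_zero : Qplus (0 : V f m) = 0 := by simp [Qplus]

namespace Sp

theorem smul_add (g : Sp f m) (u v : V f m) : g • (u + v) = g • u + g • v :=
  map_add g.1.val u v

theorem smul_smul_comm (g : Sp f m) (c : Fq f) (v : V f m) : g • (c • v) = c • g • v :=
  map_smul g.1.val c v

theorem B_smul_smul (g : Sp f m) (u v : V f m) : B (g • u) (g • v) = B u v := g.2 u v

theorem B_inv_smul (g : Sp f m) (u v : V f m) : B (g⁻¹ • u) v = B u (g • v) := by
  rw [← B_smul_smul g, smul_inv_smul]

end Sp

theorem exists_Qplus_smul_eq (g : Sp f m) :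
    ∃ c : V f m, ∀ u, Qplus (g • u) = Qplus u + B c u ^ 2 := by
  obtain ⟨ℓ, hℓ⟩ := exists_dual_sq_eq (fun u : V f m => Qplus (g • u) + Qplus u)
    (fun u v => by simp only [Sp.smul_add, Qplus_add, Sp.B_smul_smul]; grind)
    (fun c u => by simp only [Sp.smul_smul_comm, Qplus_smul]; ring)
  refine ⟨(Bform.toDual Bform_nondegenerate).symm ℓ, fun u => ?_⟩
  rw [← Bform_apply, LinearMap.BilinForm.apply_toDual_symm_apply, hℓ]
  grind

noncomputable def cocycle (g : Sp f m) : V f m := (exists_Qplus_smul_eq g).choose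

theorem Qplus_Sp_smul (g : Sp f m) (u : V f m) : Qplus (g • u) = Qplus u + B (cocycle g) u ^ 2 :=
  (exists_Qplus_smul_eq g).choose_spec u

theorem cocycle_eq {g : Sp f m} {c : V f m} (h : ∀ u, Qplus (g • u) = Qplus u + B c u ^ 2) :
    cocycle g = c :=
  eq_of_forall_B_sq_eq fun u => by have := Qplus_Sp_smul g u; grind

theorem cocycle_one : cocycle (1 : Sp f m) = 0 :=
  cocycle_eq fun u => by simp [B]

theorem cocycle_mul (g h : Sp f m) : cocycle (g * h) = cocycle h + h⁻¹ • cocycle g :=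
  cocycle_eq fun u => by
    rw [mul_smul, Qplus_Sp_smul g, Qplus_Sp_smul h, B_add_left, CharTwo.add_sq, Sp.B_inv_smul]
    ring

theorem cocycle_inv (g : Sp f m) : cocycle g⁻¹ = g • cocycle g := by
  have h := cocycle_mul g g⁻¹
  rwa [mul_inv_cancel, cocycle_one, inv_inv, eq_comm, add_eq_zero_iff_eq_neg, V.neg_eq] at h

theorem exists_add_smul_eq_cocycle_inv (g : Sp f m) : ∃ d : V f m, d + g • d = cocycle g⁻¹ := by
  have hc : cocycle g⁻¹ ∈ LinearMap.range (g.1.val - 1) := by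
    rw [Bform.range_sub_one_eq_orthogonal_ker Bform_nondegenerate g.2]
    intro n hn
    have hgn : g • n = n := sub_eq_zero.mp hn
    have := Qplus_Sp_smul g⁻¹ n
    rwa [inv_smul_eq_iff.mpr hgn.symm, left_eq_add, pow_eq_zero_iff two_ne_zero, B_comm] at this
  obtain ⟨d, hd⟩ := hc
  refine ⟨d, ?_⟩
  rw [← hd, LinearMap.sub_apply, sub_eq_add_neg, V.neg_eq, add_comm]
  rfl

noncomputable def Qw (w u : V f m) : Fq f := Qplus u + B w u ^ 2

theorem Qw_zero : Qw (0 : V f m) = Qplus := funext fun u => by simp [Qw, ← Bform_apply]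

theorem Qw_injective : Function.Injective (Qw : V f m → V f m → Fq f) := fun _ _ h =>
  eq_of_forall_B_sq_eq fun u => by simpa [Qw] using congr_fun h u

/-- `V` as an affine `Sp`-space, `g • w = g • w + cocycle g⁻¹`: the point `w` stands for the
quadratic form `Qw w`, and this is the action `Q ↦ Q ∘ g⁻¹` on these forms. -/
@[ext]
structure AffineV (f m : ℕ) where
  vec : V f m

noncomputable instance : MulAction (Sp f m) (AffineV f m) where
  smul g p := ⟨g • p.vec + cocycle g⁻¹⟩
  one_smul p := by ext1; simp [HSMul.hSMul, SMul.smul, cocycle_one]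
  mul_smul g h p := by
    ext1
    change (g * h) • p.vec + cocycle (g * h)⁻¹ = g • (h • p.vec + cocycle h⁻¹) + cocycle g⁻¹
    rw [mul_inv_rev, cocycle_mul, inv_inv, mul_smul, Sp.smul_add]
    abel

namespace AffineV

theorem smul_vec (g : Sp f m) (p : AffineV f m) : (g • p).vec = g • p.vec + cocycle g⁻¹ := rfl

def equivV : V f m ≃ AffineV f m := ⟨mk, vec, fun _ => rfl, fun _ => rfl⟩

instance : Finite (AffineV f m) := Finite.of_equiv _ equivV

theorem card_fixed (g : Sp f m) :
    Nat.card {p : AffineV f m | g • p = p} = Nat.card {v : V f m | g • v = v} := by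
  obtain ⟨d, hd⟩ := exists_add_smul_eq_cocycle_inv g
  have htrans (v : V f m) : g • (⟨v + d⟩ : AffineV f m) = ⟨g • v + d⟩ := by
    ext1
    rw [smul_vec, Sp.smul_add, ← hd, add_assoc, add_left_comm (g • d) d, V.add_self, add_zero]
  refine (Nat.card_congr (((Equiv.addRight d).trans equivV).subtypeEquiv fun v => ?_)).symm
  change g • v = v ↔ g • (⟨v + d⟩ : AffineV f m) = ⟨v + d⟩
  rw [htrans, mk.injEq, add_left_inj]

end AffineV

theorem Qw_Sp_smul (w : V f m) (g : Sp f m) (u : V f m) :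
    Qw w (g • u) = Qw (g⁻¹ • (⟨w⟩ : AffineV f m)).vec u := by
  rw [Qw, Qw, AffineV.smul_vec, inv_inv, Qplus_Sp_smul, ← Sp.B_inv_smul, B_add_left,
    CharTwo.add_sq]
  ring

theorem Ogrp_Qw (w : V f m) :
    Ogrp (Qw w) = MulAction.stabilizer (Sp f m) (⟨w⟩ : AffineV f m) := by
  ext g
  have h : g ∈ Ogrp (Qw w) ↔ g⁻¹ • (⟨w⟩ : AffineV f m) = ⟨w⟩ := by
    rw [AffineV.ext_iff, ← Qw_injective.eq_iff, funext_iff]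
    exact forall_congr' fun u => by rw [← Qw_Sp_smul]
  rw [h, inv_smul_eq_iff, eq_comm]
  rfl

theorem Qplus_cocycle_inv (g : Sp f m) {d : V f m} (hd : d + g • d = cocycle g⁻¹) :
    Qplus (cocycle g⁻¹) = artinSchreier (Fq f) (B (cocycle g) d) := by
  have hd' : g⁻¹ • d + d = cocycle g := by
    simpa [Sp.smul_add, cocycle_inv] using congrArg (g⁻¹ • ·) hd
  have hB : B d (g • d) = B (cocycle g) d := by
    rw [← Sp.B_inv_smul, ← hd', B_add_left, B_self, add_zero]
  rw [← hd, Qplus_add, Qplus_Sp_smul, hB, artinSchreier_apply]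
  grind

theorem Qplus_cocycle_inv_mem_range (g : Sp f m) :
    Qplus (cocycle g⁻¹) ∈ (artinSchreier (Fq f)).range :=
  let ⟨_, hd⟩ := exists_add_smul_eq_cocycle_inv g
  ⟨_, (Qplus_cocycle_inv g hd).symm⟩

theorem AffineV.Qplus_smul_vec_add_mem_range (g : Sp f m) (p : AffineV f m) :
    Qplus (g • p).vec + Qplus p.vec ∈ (artinSchreier (Fq f)).range := by
  have h : Qplus (g • p).vec + Qplus p.vec =
      artinSchreier (Fq f) (B (cocycle g) p.vec) + Qplus (cocycle g⁻¹) := by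
    rw [smul_vec, Qplus_add, Qplus_Sp_smul, cocycle_inv, Sp.B_smul_smul, B_comm p.vec,
      artinSchreier_apply]
    grind
  rw [h]
  exact add_mem ⟨_, rfl⟩ (Qplus_cocycle_inv_mem_range g)

namespace Sp

noncomputable def transvection (u : V f m) (l : Fq f) : Sp f m :=
  ⟨LinearMap.GeneralLinearGroup.ofLinearEquiv (LinearEquiv.transvection (f := l • Bform u) (v := u)
    (by simp [Bform_apply, B_self])), fun x y => by
      change B (x + (l * B u x) • u) (y + (l * B u y) • u) = B x y
      rw [B_add_left, B_add_right, B_add_right, B_smul_left, B_smul_left, B_smul_right,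
        B_smul_right, B_self, B_comm x u]
      grind⟩

theorem transvection_smul (u : V f m) (l : Fq f) (x : V f m) :
    transvection u l • x = x + (l * B u x) • u := rfl

theorem transvection_mul_self (u : V f m) (l : Fq f) :
    transvection u l * transvection u l = 1 :=
  Subtype.ext <| Units.ext <| LinearMap.ext fun x => by
    change transvection u l • transvection u l • x = x
    rw [transvection_smul, transvection_smul, B_add_right, B_smul_right, B_self, mul_zero,
      add_zero, add_assoc, V.add_self, add_zero]

theorem transvection_inv (u : V f m) (l : Fq f) : (transvection u l)⁻¹ = transvection u l :=
  inv_eq_of_mul_eq_one_right (transvection_mul_self u l)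

theorem cocycle_transvection {u : V f m} {l ν : Fq f} (hν : ν ^ 2 = l ^ 2 * Qplus u + l) :
    cocycle (transvection u l) = ν • u :=
  cocycle_eq fun x => by
    rw [transvection_smul, Qplus_add, Qplus_smul, B_smul_right, B_smul_left, mul_pow ν, hν,
      B_comm x]
    ring

end Sp

theorem exists_smul_mk_eq_mk_add {w u : V f m}
    (h : Qplus u + B w u ∈ (artinSchreier (Fq f)).range) :
    ∃ t : Sp f m, t • (⟨w⟩ : AffineV f m) = ⟨w + u⟩ := by
  obtain ⟨α, hα⟩ := h
  rw [artinSchreier_apply, B_comm] at hα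
  obtain ⟨l, hl⟩ := exists_sq_mul_add_eq_one (k := Qplus u + B u w ^ 2) (γ := α + B u w)
    (by grind)
  -- With this `l`, the transvection along `u` moves `w` by `l B(u, w) • u` and its cocycle is
  -- `(1 + l B(u, w)) • u`, so the affine action translates `w` by exactly `u`.
  have hν : (1 + l * B u w) ^ 2 = l ^ 2 * Qplus u + l := by grind
  refine ⟨Sp.transvection u l, AffineV.ext ?_⟩
  rw [AffineV.smul_vec, Sp.transvection_inv, Sp.cocycle_transvection hν, Sp.transvection_smul,
    add_assoc, ← add_smul, show l * B u w + (1 + l * B u w) = 1 by grind, one_smul]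

theorem AffineV.mem_orbit_iff {p q : AffineV f m} :
    p ∈ MulAction.orbit (Sp f m) q ↔ Qplus p.vec + Qplus q.vec ∈ (artinSchreier (Fq f)).range := by
  refine ⟨fun ⟨g, hg⟩ => hg ▸ Qplus_smul_vec_add_mem_range g q, fun h => ?_⟩
  have hp : q.vec + (p.vec + q.vec) = p.vec := by rw [add_left_comm, V.add_self, add_zero]
  have hQ := Qplus_add q.vec (p.vec + q.vec)
  rw [hp] at hQ
  obtain ⟨t, ht⟩ := exists_smul_mk_eq_mk_add (w := q.vec) (u := p.vec + q.vec) (by grind)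
  exact ⟨t, show t • q = p by rw [ht, hp]⟩

noncomputable def minusPoint (hm : 0 < m) (a : Fq f) : V f m :=
  (Pi.single ⟨0, hm⟩ ((frobeniusEquiv (Fq f) 2).symm a), Pi.single ⟨0, hm⟩ 1)

theorem Qplus_minusPoint (hm : 0 < m) (a : Fq f) :
    Qplus (minusPoint hm a) = (frobeniusEquiv (Fq f) 2).symm a := by
  simp [Qplus, minusPoint, Pi.single_apply]

theorem Qminus_eq_Qw (hm : 0 < m) (a : Fq f) : Qminus hm a = Qw (minusPoint hm a) := by
  funext u
  simp only [Qminus, Qw, Qplus, B, minusPoint, Pi.single_apply, ite_mul, zero_mul, one_mul,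
    Finset.sum_add_distrib, Finset.sum_ite_eq', Finset.mem_univ, if_true, CharTwo.add_sq, mul_pow,
    frobeniusEquiv_symm_pow_p]
  ring

end Symplectic

theorem permChar_natural_eq_permChar_cosets_plus_add_minus_general
    (f m : ℕ) (hm : 0 < m) (a : Fq f)
    (ha : ∀ α : Fq f, α ^ 2 + α ≠ a) (g : Sp f m) :
    Nat.card {v : V f m | g • v = v} =
      Nat.card {ω : Sp f m ⧸ Oplus f m | g • ω = ω} +
        Nat.card {ω : Sp f m ⧸ Ominus f m hm a | g • ω = ω} := by
  have hplus : Oplus f m = MulAction.stabilizer (Sp f m) (⟨0⟩ : AffineV f m) := by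
    rw [Oplus, ← Qw_zero, Ogrp_Qw]
  have hminus :
      Ominus f m hm a = MulAction.stabilizer (Sp f m) (⟨minusPoint hm a⟩ : AffineV f m) := by
    rw [Ominus, Qminus_eq_Qw, Ogrp_Qw]
  have hnot : Qplus (minusPoint hm a) ∉ (artinSchreier (Fq f)).range := fun h => by
    obtain ⟨α, hα⟩ := sq_mem_range_artinSchreier h
    rw [Qplus_minusPoint, frobeniusEquiv_symm_pow_p, artinSchreier_apply] at hα
    exact ha α hα
  rw [hplus, hminus, ← AffineV.card_fixed]
  refine MulAction.card_fixed_eq_add_of_orbits ?_ (fun p => ?_) g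
  · rwa [AffineV.mem_orbit_iff, Qplus_zero, add_zero]
  · simp_rw [AffineV.mem_orbit_iff, Qplus_zero, add_zero]
    by_cases hp : Qplus p.vec ∈ (artinSchreier (Fq f)).range
    exacts [.inl hp, .inr (add_mem_range_artinSchreier hp hnot)]

/-- The permutation character of `Sp_{2m}(2^f)` acting on its natural module `V` equals the
sum of the permutation characters of its actions on the coset spaces `Ω⁺ = G/O⁺` and
`Ω⁻ = G/O⁻`: for each `g`, the number of fixed vectors in `V` is the number of fixed
cosets in `Ω⁺` plus the number of fixed cosets in `Ω⁻`. -/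
theorem permChar_natural_eq_permChar_cosets_plus_add_minus
    (f m : ℕ) (hf : 1 ≤ f) (hm : 0 < m) (a : Fq f)
    (ha : ∀ α : Fq f, α ^ 2 + α ≠ a) (g : Sp f m) :
    Nat.card {v : V f m | g • v = v} =
      Nat.card {ω : Sp f m ⧸ Oplus f m | g • ω = ω} +
        Nat.card {ω : Sp f m ⧸ Ominus f m hm a | g • ω = ω} :=
  permChar_natural_eq_permChar_cosets_plus_add_minus_general f m hm a ha g
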